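/- Let n ≥ 1 and let J be an integer with 0 ≤ 2J ≤ n and 2J ≡ n (mod 2); set m = n − 2J. Then for all 0 ≤ k, l ≤ 2J: ⟨ξ_{k,J}| S_{xz} |ξ_{l,J}⟩ = (2J−1−2l)·√((2J−l)(l+1))·δ(k−l−1) + (2J−1−2k)·√((2J−k)(k+1))·δ(l−k−1); ⟨ξ_{k,J}| S_{yz} |ξ_{l,J}⟩ = i·sgn(k−l)·[(2J−1−2l)·√((2J−l)(l+1))·δ(k−l−1) + (2J−1−2k)·√((2J−k)(k+1))·δ(l−k−1)]; and ⟨ξ_{k,J}| S_{xy} |ξ_{l,J}⟩ = i·sgn(k−l)·[√((l+1)(l+2)(2J−l)(2J−l−1))·δ(k−l−2) + √((k+1)(k+2)(2J−k)(2J−k−1))·δ(l−k−2)]. -/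

import Mathlib

noncomputable section

open scoped ComplexConjugate

/-- Operators on `n` qubits: `2ⁿ × 2ⁿ` complex matrices indexed by bitstrings. -/
abbrev QOp (n : ℕ) := Matrix (Fin n → Fin 2) (Fin n → Fin 2) ℂ

/-- The single-qubit operator `M` acting on the `i`-th tensor factor and as the
identity on all the other factors. -/
def onQubit (n : ℕ) (i : Fin n) (M : Matrix (Fin 2) (Fin 2) ℂ) : QOp n :=
  Matrix.of fun f g =>
    M (f i) (g i) * ∏ j ∈ Finset.univ.erase i, (if f j = g j then (1 : ℂ) else 0)

/-- The collective operator `S_M = Σᵢ M⁽ⁱ⁾`. -/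
def collS (n : ℕ) (M : Matrix (Fin 2) (Fin 2) ℂ) : QOp n := ∑ i : Fin n, onQubit n i M

/-- The collective two-body operator `S_{MN} = Σ_{i≠j} M⁽ⁱ⁾ N⁽ʲ⁾`. -/
def collSS (n : ℕ) (M N : Matrix (Fin 2) (Fin 2) ℂ) : QOp n :=
  ∑ i : Fin n, ∑ j ∈ Finset.univ.erase i, onQubit n i M * onQubit n j N

def pauliX : Matrix (Fin 2) (Fin 2) ℂ := !![0, 1; 1, 0]
def pauliY : Matrix (Fin 2) (Fin 2) ℂ := !![0, -Complex.I; Complex.I, 0]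
def pauliZ : Matrix (Fin 2) (Fin 2) ℂ := !![1, 0; 0, -1]

/-- The matrix element `⟨ψ| A |φ⟩`. -/
def braket {n : ℕ} (ψ : (Fin n → Fin 2) → ℂ) (A : QOp n) (φ : (Fin n → Fin 2) → ℂ) : ℂ :=
  ∑ f : Fin n → Fin 2, ∑ g : Fin n → Fin 2, conj (ψ f) * A f g * φ g

/-- Kronecker delta `δ(a)` on the integers, valued in `ℂ`. -/
def kdel (a : ℤ) : ℂ := if a = 0 then 1 else 0

/-- Extend a bitstring on `Fin n` to all of `ℕ` by zeros. -/
def extendBits (n : ℕ) (f : Fin n → Fin 2) : ℕ → Fin 2 :=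
  fun m => if h : m < n then f ⟨m, h⟩ else 0

/-- Amplitudes of the two-qubit singlet state `(|01⟩ − |10⟩)/√2`. -/
def singletAmp (x y : Fin 2) : ℂ :=
  (((if x = 0 ∧ y = 1 then 1 else 0) - (if x = 1 ∧ y = 0 then 1 else 0)) : ℂ)
    / ((Real.sqrt 2 : ℝ) : ℂ)

/-- The state `|ξ_{k,J}⟩ = |D^k_{2J}⟩ ⊗ |ψ⁻⟩^{⊗(n−2J)/2}`: the symmetric Dicke state with
`k` excitations on the first `2J` qubits, tensored with singlets on the remaining
`n − 2J` qubits (paired consecutively). -/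
def xiState (n J k : ℕ) : (Fin n → Fin 2) → ℂ := fun f =>
  (if ((Finset.range (2 * J)).filter fun m => extendBits n f m = 1).card = k
      then (((Real.sqrt ((2 * J).choose k) : ℝ) : ℂ))⁻¹ else 0) *
  ∏ a ∈ Finset.range ((n - 2 * J) / 2),
    singletAmp (extendBits n f (2 * J + 2 * a)) (extendBits n f (2 * J + 2 * a + 1))

/-!
Since `Σ_{i ≠ j} P⁽ⁱ⁾ Q⁽ʲ⁾ = S_P S_Q - Σᵢ (PQ)⁽ⁱ⁾`, each two-body operator is a polynomial in
one-body collective operators of traceless matrices (`P`, `Q` and `PQ` for distinct Paulis).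
A one-body collective operator acts on a tensor product by the Leibniz rule and sends the singlet
to `tr M • |ψ⁻⟩`, so on `|ξ_{k,J}⟩ = |D^k_{2J}⟩ ⊗ |ψ⁻⟩^{⊗ m/2}` the singlets are inert and the
matrix elements are those between Dicke states. There a one-body collective operator changes the
number of excitations by at most one, with coefficients linear in `k`, and the square roots come
from normalising with `(k + 1) C(N, k + 1) = (N - k) C(N, k)`.
-/

open Finset Matrix Function

section Operators

variable {n : ℕ}

theorem onQubit_mulVec_apply (i : Fin n) (M : Matrix (Fin 2) (Fin 2) ℂ)
    (φ : (Fin n → Fin 2) → ℂ) (f : Fin n → Fin 2) :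
    (onQubit n i M *ᵥ φ) f = ∑ x, M (f i) x * φ (update f i x) := by
  have hsupp : ∀ g : Fin n → Fin 2, (∏ j ∈ univ.erase i, if f j = g j then (1 : ℂ) else 0)
      = if g ∈ univ.image (update f i) then 1 else 0 := by
    intro g
    rw [Finset.prod_boole]
    congr 1
    simp only [mem_erase, mem_univ, and_true, mem_image, true_and]
    refine propext ⟨fun h => ⟨g i, ?_⟩, ?_⟩
    · exact (eq_update_iff.2 ⟨rfl, fun j hj => (h j hj).symm⟩).symm
    · rintro ⟨x, rfl⟩ j hj
      exact (update_of_ne hj _ _).symm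
  simp only [mulVec, dotProduct, onQubit, of_apply, hsupp, mul_ite, mul_one, mul_zero, ite_mul,
    zero_mul]
  rw [← Finset.sum_filter, Finset.filter_mem_eq_inter, univ_inter,
    Finset.sum_image fun x _ y _ h => by simpa using congrFun h i]
  simp

theorem onQubit_mul_onQubit_self (i : Fin n) (M N : Matrix (Fin 2) (Fin 2) ℂ) :
    onQubit n i M * onQubit n i N = onQubit n i (M * N) := by
  ext f g
  rw [mul_apply, ← dotProduct, ← mulVec, onQubit_mulVec_apply]
  simp only [onQubit, of_apply, mul_apply, update_self, sum_mul, ← mul_assoc]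
  refine Finset.sum_congr rfl fun x _ => ?_
  congr 1
  exact Finset.prod_congr rfl fun j hj => by rw [update_of_ne (ne_of_mem_erase hj)]

theorem collSS_eq_collS_mul_collS_sub (M N : Matrix (Fin 2) (Fin 2) ℂ) :
    collSS n M N = collS n M * collS n N - collS n (M * N) := by
  simp only [collSS, collS, Finset.sum_mul_sum, ← onQubit_mul_onQubit_self, eq_sub_iff_add_eq,
    ← Finset.sum_add_distrib]
  exact Finset.sum_congr rfl fun i _ => Finset.sum_erase_add _ _ (mem_univ i)

theorem collS_mulVec_apply (M : Matrix (Fin 2) (Fin 2) ℂ) (φ : (Fin n → Fin 2) → ℂ)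
    (f : Fin n → Fin 2) :
    (collS n M *ᵥ φ) f = ∑ i, ∑ x, M (f i) x * φ (update f i x) := by
  simp only [collS, sum_mulVec, Finset.sum_apply, onQubit_mulVec_apply]

theorem braket_eq_dotProduct (ψ : (Fin n → Fin 2) → ℂ) (A : QOp n) (φ : (Fin n → Fin 2) → ℂ) :
    braket ψ A φ = star ψ ⬝ᵥ (A *ᵥ φ) := by
  simp only [braket, dotProduct, mulVec, Finset.mul_sum, mul_assoc, Pi.star_apply,
    Complex.star_def]

end Operators

theorem Fin.castAdd_ne_natAdd {a b : ℕ} (i : Fin a) (j : Fin b) :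
    Fin.castAdd b i ≠ Fin.natAdd a j :=
  Fin.ne_of_val_ne (by simp only [Fin.val_castAdd, Fin.val_natAdd]; omega)

theorem Fin.sum_univ_append {α M : Type*} [Fintype α] [AddCommMonoid M] {a b : ℕ}
    (F : (Fin (a + b) → α) → M) :
    ∑ f, F f = ∑ u, ∑ v, F (Fin.append u v) := by
  rw [← (Fin.appendEquiv a b).sum_comp, Fintype.sum_prod_type]
  rfl

section Tensor

variable {a b : ℕ}

def tensorState (ψ : (Fin a → Fin 2) → ℂ) (φ : (Fin b → Fin 2) → ℂ) :
    (Fin (a + b) → Fin 2) → ℂ :=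
  fun f => ψ (f ∘ Fin.castAdd b) * φ (f ∘ Fin.natAdd a)

@[simp]
theorem tensorState_append (ψ : (Fin a → Fin 2) → ℂ) (φ : (Fin b → Fin 2) → ℂ)
    (u : Fin a → Fin 2) (v : Fin b → Fin 2) :
    tensorState ψ φ (Fin.append u v) = ψ u * φ v := by
  simp only [tensorState]
  rw [show Fin.append u v ∘ Fin.castAdd b = u from funext (Fin.append_left u v),
    show Fin.append u v ∘ Fin.natAdd a = v from funext (Fin.append_right u v)]

theorem dotProduct_tensorState (ψ ψ' : (Fin a → Fin 2) → ℂ) (φ φ' : (Fin b → Fin 2) → ℂ) :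
    star (tensorState ψ φ) ⬝ᵥ tensorState ψ' φ' = (star ψ ⬝ᵥ ψ') * (star φ ⬝ᵥ φ') := by
  simp only [dotProduct, Fin.sum_univ_append, Pi.star_apply, tensorState_append, star_mul',
    Finset.sum_mul_sum]
  exact Finset.sum_congr rfl fun _ _ => Finset.sum_congr rfl fun _ _ => by ring

theorem tensorState_sub_left (ψ ψ' : (Fin a → Fin 2) → ℂ) (φ : (Fin b → Fin 2) → ℂ) :
    tensorState (ψ - ψ') φ = tensorState ψ φ - tensorState ψ' φ := by
  funext f
  simp only [tensorState, Pi.sub_apply, sub_mul]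

@[simp]
theorem tensorState_zero_right (ψ : (Fin a → Fin 2) → ℂ) :
    tensorState ψ (0 : (Fin b → Fin 2) → ℂ) = 0 := by
  funext f
  simp [tensorState]

theorem collS_mulVec_tensorState (M : Matrix (Fin 2) (Fin 2) ℂ) (ψ : (Fin a → Fin 2) → ℂ)
    (φ : (Fin b → Fin 2) → ℂ) :
    collS (a + b) M *ᵥ tensorState ψ φ
      = tensorState (collS a M *ᵥ ψ) φ + tensorState ψ (collS b M *ᵥ φ) := by
  funext f
  have hcast : ∀ i x, update f (Fin.castAdd b i) x ∘ Fin.natAdd a = f ∘ Fin.natAdd a :=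
    fun i x => update_comp_eq_of_forall_ne _ _ fun j => (Fin.castAdd_ne_natAdd i j).symm
  have hnat : ∀ j x, update f (Fin.natAdd a j) x ∘ Fin.castAdd b = f ∘ Fin.castAdd b :=
    fun j x => update_comp_eq_of_forall_ne _ _ fun i => Fin.castAdd_ne_natAdd i j
  simp only [collS_mulVec_apply, Fin.sum_univ_add, tensorState, Pi.add_apply, hcast, hnat,
    update_comp_eq_of_injective _ (Fin.castAdd_injective a b),
    update_comp_eq_of_injective _ (Fin.natAdd_injective b a), Function.comp_apply,
    Finset.sum_mul, Finset.mul_sum]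
  congr 1 <;> exact Finset.sum_congr rfl fun _ _ => Finset.sum_congr rfl fun _ _ => by ring

end Tensor

section Singlet

theorem extendBits_add_of_lt {a b : ℕ} (f : Fin (a + b) → Fin 2) {m : ℕ} (hm : m < a) :
    extendBits (a + b) f m = extendBits a (f ∘ Fin.castAdd b) m := by
  simp [extendBits, hm, show m < a + b by omega]

theorem extendBits_add_add {a b : ℕ} (f : Fin (a + b) → Fin 2) (m : ℕ) :
    extendBits (a + b) f (a + m) = extendBits b (f ∘ Fin.natAdd a) m := by
  by_cases hm : m < b <;> simp [extendBits, hm]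

def singlet : (Fin 2 → Fin 2) → ℂ := fun f => singletAmp (f 0) (f 1)

def singletChain (p : ℕ) : (Fin (2 * p) → Fin 2) → ℂ := fun v =>
  ∏ a ∈ range p, singletAmp (extendBits (2 * p) v (2 * a)) (extendBits (2 * p) v (2 * a + 1))

theorem singletChain_succ (p : ℕ) :
    singletChain (p + 1) = tensorState (singletChain p) singlet := by
  funext v
  have h0 : extendBits (2 * p + 2) v (2 * p) = v (Fin.natAdd (2 * p) 0) := by
    simp [extendBits]; rfl
  have h1 : extendBits (2 * p + 2) v (2 * p + 1) = v (Fin.natAdd (2 * p) 1) := by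
    simp [extendBits]; rfl
  show ∏ a ∈ range (p + 1), singletAmp (extendBits (2 * p + 2) v (2 * a))
    (extendBits (2 * p + 2) v (2 * a + 1)) = _
  rw [prod_range_succ, h0, h1]
  refine congrArg₂ (· * ·) (Finset.prod_congr rfl fun a ha => ?_) rfl
  have ha := mem_range.1 ha
  rw [extendBits_add_of_lt (a := 2 * p) (b := 2) v (by omega),
    extendBits_add_of_lt (a := 2 * p) (b := 2) v (by omega)]

theorem dotProduct_singlet_self : star singlet ⬝ᵥ singlet = 1 := by
  rw [dotProduct, ← (finTwoArrowEquiv (Fin 2)).symm.sum_comp, Fintype.sum_prod_type]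
  have h2 : ((√2 : ℝ) : ℂ) ^ 2 = 2 := by norm_cast; simp
  simp [singlet, singletAmp, Fin.sum_univ_two]
  field_simp
  linear_combination -h2

theorem collS_mulVec_singlet (M : Matrix (Fin 2) (Fin 2) ℂ) :
    collS 2 M *ᵥ singlet = M.trace • singlet := by
  funext f
  obtain ⟨x, y, rfl⟩ : ∃ x y : Fin 2, f = ![x, y] := ⟨f 0, f 1, by ext i; fin_cases i <;> rfl⟩
  simp only [collS_mulVec_apply, Fin.sum_univ_two, Matrix.trace_fin_two, singlet, Pi.smul_apply,
    smul_eq_mul]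
  fin_cases x <;> fin_cases y <;> simp [singletAmp] <;> ring

theorem collS_mulVec_singletChain {M : Matrix (Fin 2) (Fin 2) ℂ} (hM : M.trace = 0) (p : ℕ) :
    collS (2 * p) M *ᵥ singletChain p = 0 := by
  induction p with
  | zero => simp [collS]
  | succ p ih =>
    rw [singletChain_succ]
    show collS (2 * p + 2) M *ᵥ _ = 0
    rw [collS_mulVec_tensorState, ih, collS_mulVec_singlet, hM, zero_smul]
    funext f
    simp [tensorState]

theorem dotProduct_singletChain_self (p : ℕ) : star (singletChain p) ⬝ᵥ singletChain p = 1 := by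
  induction p with
  | zero => simp [singletChain, dotProduct]
  | succ p ih =>
    rw [singletChain_succ, dotProduct_tensorState, ih, one_mul, dotProduct_singlet_self]

variable {N : ℕ}

theorem collS_mulVec_tensorState_singletChain {M : Matrix (Fin 2) (Fin 2) ℂ} (hM : M.trace = 0)
    (p : ℕ) (ψ : (Fin N → Fin 2) → ℂ) :
    collS (N + 2 * p) M *ᵥ tensorState ψ (singletChain p)
      = tensorState (collS N M *ᵥ ψ) (singletChain p) := by
  rw [collS_mulVec_tensorState, collS_mulVec_singletChain hM, tensorState_zero_right, add_zero]

theorem collSS_mulVec_tensorState_singletChain {P Q : Matrix (Fin 2) (Fin 2) ℂ}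
    (hP : P.trace = 0) (hQ : Q.trace = 0) (hPQ : (P * Q).trace = 0) (p : ℕ)
    (ψ : (Fin N → Fin 2) → ℂ) :
    collSS (N + 2 * p) P Q *ᵥ tensorState ψ (singletChain p)
      = tensorState (collSS N P Q *ᵥ ψ) (singletChain p) := by
  rw [collSS_eq_collS_mul_collS_sub, collSS_eq_collS_mul_collS_sub, sub_mulVec, sub_mulVec,
    ← mulVec_mulVec, ← mulVec_mulVec,
    collS_mulVec_tensorState_singletChain hQ, collS_mulVec_tensorState_singletChain hP,
    collS_mulVec_tensorState_singletChain hPQ, tensorState_sub_left]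

end Singlet

section Pauli

theorem trace_pauliX : pauliX.trace = 0 := by simp [pauliX, trace_fin_two]
theorem trace_pauliY : pauliY.trace = 0 := by simp [pauliY, trace_fin_two]
theorem trace_pauliZ : pauliZ.trace = 0 := by simp [pauliZ, trace_fin_two]

theorem pauliX_mul_pauliZ : pauliX * pauliZ = !![0, -1; 1, 0] := by
  simp [pauliX, pauliZ]
theorem pauliY_mul_pauliZ : pauliY * pauliZ = !![0, Complex.I; Complex.I, 0] := by
  simp [pauliY, pauliZ]
theorem pauliX_mul_pauliY : pauliX * pauliY = !![Complex.I, 0; 0, -Complex.I] := by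
  simp [pauliX, pauliY]

end Pauli

section Dicke

variable {N : ℕ}

def weight (u : Fin N → Fin 2) : ℕ := ∑ i, (u i : ℕ)

/-- The unnormalised Dicke state, indexed by an integer so that the ladder formula
`collS_mulVec_weightState` needs no case distinction at `k = 0` (the state of weight `-1` is 0). -/
def weightState (N : ℕ) (k : ℤ) : (Fin N → Fin 2) → ℂ :=
  fun u => if (weight u : ℤ) = k then 1 else 0

theorem weight_update (u : Fin N → Fin 2) (i : Fin N) (x : Fin 2) :
    (weight (update u i x) : ℤ) = weight u - (u i : ℕ) + (x : ℕ) := by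
  simp only [weight, ← add_sum_erase _ _ (mem_univ i), update_self]
  rw [Finset.sum_congr rfl fun j hj => by rw [update_of_ne (ne_of_mem_erase hj)]]
  push_cast
  ring

theorem sum_apply_eq_weight (u : Fin N → Fin 2) (g : Fin 2 → ℂ) :
    ∑ i, g (u i) = (N - weight u) * g 0 + weight u * g 1 := by
  have hg : ∀ y : Fin 2, g y = g 0 + (y : ℕ) * (g 1 - g 0) := by
    intro y; fin_cases y <;> simp
  simp only [hg (u _), sum_add_distrib, sum_const, card_univ, Fintype.card_fin, nsmul_eq_mul,
    ← sum_mul, weight]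
  push_cast
  ring

theorem weight_eq_card (u : Fin N → Fin 2) : weight u = #{i | u i = 1} := by
  rw [weight, card_filter]
  refine Finset.sum_congr rfl fun i _ => ?_
  generalize u i = y
  fin_cases y <;> rfl

theorem card_weight_eq_choose (k : ℕ) : #{u : Fin N → Fin 2 | weight u = k} = N.choose k := by
  calc #{u : Fin N → Fin 2 | weight u = k} = #((univ : Finset (Fin N)).powersetCard k) := by
        refine card_nbij' (fun u => ({i | u i = 1} : Finset (Fin N)))
          (fun s i => if i ∈ s then 1 else 0) ?_ ?_ ?_ ?_
        · intro u hu
          simpa [← weight_eq_card] using hu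
        · intro s hs
          simp_all [weight_eq_card]
        · intro u _
          funext i
          generalize hy : u i = y
          fin_cases y <;> simp_all
        · intro s _
          ext i
          simp
    _ = N.choose k := by simp

theorem collS_mulVec_weightState (M : Matrix (Fin 2) (Fin 2) ℂ) (k : ℤ) :
    collS N M *ᵥ weightState N k
      = (M 1 0 * (k + 1)) • weightState N (k + 1)
        + (M 0 0 * (N - k) + M 1 1 * k) • weightState N k
        + (M 0 1 * (N + 1 - k)) • weightState N (k - 1) := by
  funext u
  simp only [collS_mulVec_apply, Pi.add_apply, Pi.smul_apply, smul_eq_mul, weightState,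
    weight_update]
  rw [sum_apply_eq_weight u fun y => ∑ x : Fin 2,
    M y x * if (weight u : ℤ) - (y : ℕ) + (x : ℕ) = k then 1 else 0]
  have hw : ((weight u : ℕ) : ℂ) = ((weight u : ℤ) : ℂ) := rfl
  generalize (weight u : ℤ) = w at hw ⊢
  simp only [Fin.sum_univ_two, hw, Fin.val_zero, Fin.val_one, Nat.cast_zero, Nat.cast_one,
    sub_zero, add_zero]
  split_ifs <;> first | omega | (subst_vars; push_cast; ring)

theorem collSS_pauliX_pauliZ_mulVec_weightState (l : ℤ) :
    collSS N pauliX pauliZ *ᵥ weightState N l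
      = ((N - 2 * l - 1) * (l + 1)) • weightState N (l + 1)
        + ((N - 2 * l + 1) * (N + 1 - l)) • weightState N (l - 1) := by
  rw [collSS_eq_collS_mul_collS_sub, pauliX_mul_pauliZ]
  simp only [sub_mulVec, ← mulVec_mulVec, collS_mulVec_weightState, mulVec_add, mulVec_smul,
    pauliX, pauliZ, of_apply, cons_val', cons_val_zero, cons_val_one, empty_val',
    cons_val_fin_one, add_sub_cancel_right, sub_add_cancel]
  module

theorem collSS_pauliY_pauliZ_mulVec_weightState (l : ℤ) :
    collSS N pauliY pauliZ *ᵥ weightState N l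
      = (Complex.I * (N - 2 * l - 1) * (l + 1)) • weightState N (l + 1)
        - (Complex.I * (N - 2 * l + 1) * (N + 1 - l)) • weightState N (l - 1) := by
  rw [collSS_eq_collS_mul_collS_sub, pauliY_mul_pauliZ]
  simp only [sub_mulVec, ← mulVec_mulVec, collS_mulVec_weightState, mulVec_add, mulVec_smul,
    pauliY, pauliZ, of_apply, cons_val', cons_val_zero, cons_val_one, empty_val',
    cons_val_fin_one, add_sub_cancel_right, sub_add_cancel]
  module

theorem collSS_pauliX_pauliY_mulVec_weightState (l : ℤ) :
    collSS N pauliX pauliY *ᵥ weightState N l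
      = (Complex.I * (l + 1) * (l + 2)) • weightState N (l + 2)
        - (Complex.I * (N + 1 - l) * (N + 2 - l)) • weightState N (l - 2) := by
  rw [collSS_eq_collS_mul_collS_sub, pauliX_mul_pauliY]
  simp only [sub_mulVec, ← mulVec_mulVec, collS_mulVec_weightState, mulVec_add, mulVec_smul,
    pauliX, pauliY, of_apply, cons_val', cons_val_zero, cons_val_one, empty_val',
    cons_val_fin_one, add_sub_cancel_right, sub_add_cancel,
    show l + 1 + 1 = l + 2 by ring, show l - 1 - 1 = l - 2 by ring]
  module

def dickeState (N k : ℕ) : (Fin N → Fin 2) → ℂ :=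
  ((√(N.choose k) : ℝ) : ℂ)⁻¹ • weightState N k

end Dicke

section XiState

theorem card_filter_extendBits_eq_weight {a b : ℕ} (f : Fin (a + b) → Fin 2) :
    #{m ∈ range a | extendBits (a + b) f m = 1} = weight (f ∘ Fin.castAdd b) := by
  rw [weight_eq_card, card_filter, card_filter,
    ← Fin.sum_univ_eq_sum_range (fun m => if extendBits (a + b) f m = 1 then 1 else 0)]
  refine Finset.sum_congr rfl fun i _ => ?_
  rw [extendBits_add_of_lt f i.isLt]
  simp [extendBits]

theorem xiState_eq_tensorState (J p k : ℕ) :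
    xiState (2 * J + 2 * p) J k = tensorState (dickeState (2 * J) k) (singletChain p) := by
  funext f
  simp only [xiState, tensorState, dickeState, singletChain, weightState, Pi.smul_apply,
    smul_eq_mul, mul_ite, mul_one, mul_zero, card_filter_extendBits_eq_weight, Nat.cast_inj,
    show (2 * J + 2 * p - 2 * J) / 2 = p by omega, add_assoc, extendBits_add_add]

theorem braket_xiState_collSS_eq_braket_dickeState {P Q : Matrix (Fin 2) (Fin 2) ℂ}
    (hP : P.trace = 0) (hQ : Q.trace = 0) (hPQ : (P * Q).trace = 0) (J p k l : ℕ) :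
    braket (xiState (2 * J + 2 * p) J k) (collSS (2 * J + 2 * p) P Q)
        (xiState (2 * J + 2 * p) J l)
      = braket (dickeState (2 * J) k) (collSS (2 * J) P Q) (dickeState (2 * J) l) := by
  rw [braket_eq_dotProduct, braket_eq_dotProduct, xiState_eq_tensorState, xiState_eq_tensorState,
    collSS_mulVec_tensorState_singletChain hP hQ hPQ, dotProduct_tensorState,
    dotProduct_singletChain_self, mul_one]

end XiState

section Normalization

theorem div_sqrt_mul_sqrt_eq_sqrt {P x y Q : ℝ} (hx : 0 < x) (hy : 0 < y) (hP : 0 ≤ P)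
    (h : P ^ 2 = x * y * Q) : P / (√x * √y) = √Q := by
  rw [← Real.sqrt_mul hx.le, show Q = P ^ 2 / (x * y) by field_simp; linarith,
    Real.sqrt_div' _ (by positivity), Real.sqrt_sq hP]

variable {N k : ℕ}

theorem succ_mul_choose_succ_eq (h : k ≤ N) :
    ((k + 1) * N.choose (k + 1) : ℝ) = (N - k) * N.choose k := by
  have := Nat.choose_succ_right_eq N k
  rw [← Nat.cast_sub h]
  exact_mod_cast (mul_comm _ _).trans (this.trans (mul_comm _ _))

theorem succ_mul_succ_mul_choose_eq (h : k + 1 ≤ N) :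
    ((k + 1) * (k + 2) * N.choose (k + 2) : ℝ) = (N - k) * (N - k - 1) * N.choose k := by
  have e1 := succ_mul_choose_succ_eq (N := N) (k := k) (by omega)
  have e2 := succ_mul_choose_succ_eq (N := N) (k := k + 1) h
  rw [show k + 1 + 1 = k + 2 from rfl] at e2
  push_cast at e2
  linear_combination (k + 1 : ℝ) * e2 + (N - k - 1 : ℝ) * e1

theorem succ_mul_choose_succ_div_sqrt (h : k + 1 ≤ N) :
    ((k + 1) * N.choose (k + 1) : ℝ) / (√(N.choose k) * √(N.choose (k + 1)))
      = √((N - k) * (k + 1)) := by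
  have h0 : (0 : ℝ) < N.choose k := by exact_mod_cast Nat.choose_pos (by omega)
  have h1 : (0 : ℝ) < N.choose (k + 1) := by exact_mod_cast Nat.choose_pos h
  refine div_sqrt_mul_sqrt_eq_sqrt h0 h1 (by positivity) ?_
  linear_combination ((k + 1) * N.choose (k + 1) : ℝ) * succ_mul_choose_succ_eq (N := N) (k := k)
    (by omega)

theorem sub_mul_choose_div_sqrt (h : k + 1 ≤ N) :
    ((N - k) * N.choose k : ℝ) / (√(N.choose k) * √(N.choose (k + 1)))
      = √((N - k) * (k + 1)) := by
  rw [← succ_mul_choose_succ_eq (by omega), succ_mul_choose_succ_div_sqrt h]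

theorem succ_mul_succ_mul_choose_div_sqrt (h : k + 2 ≤ N) :
    ((k + 1) * (k + 2) * N.choose (k + 2) : ℝ) / (√(N.choose k) * √(N.choose (k + 2)))
      = √((k + 1) * (k + 2) * (N - k) * (N - k - 1)) := by
  have h0 : (0 : ℝ) < N.choose k := by exact_mod_cast Nat.choose_pos (by omega)
  have h2 : (0 : ℝ) < N.choose (k + 2) := by exact_mod_cast Nat.choose_pos h
  refine div_sqrt_mul_sqrt_eq_sqrt h0 h2 (by positivity) ?_
  linear_combination ((k + 1) * (k + 2) * N.choose (k + 2) : ℝ)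
    * succ_mul_succ_mul_choose_eq (N := N) (k := k) (by omega)

theorem sub_mul_sub_mul_choose_div_sqrt (h : k + 2 ≤ N) :
    ((N - k) * (N - k - 1) * N.choose k : ℝ) / (√(N.choose k) * √(N.choose (k + 2)))
      = √((k + 1) * (k + 2) * (N - k) * (N - k - 1)) := by
  rw [← succ_mul_succ_mul_choose_eq (by omega), succ_mul_succ_mul_choose_div_sqrt h]

end Normalization

section DickeMatrixElements

variable {N : ℕ}

theorem dotProduct_weightState (k : ℕ) (m : ℤ) :
    star (weightState N k) ⬝ᵥ weightState N m = if (k : ℤ) = m then (N.choose k : ℂ) else 0 := by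
  have hterm : ∀ u, star (weightState N k u) * weightState N m u
      = if (k : ℤ) = m ∧ weight u = k then 1 else 0 := by
    intro u
    simp only [weightState]
    split_ifs <;> simp_all
  simp only [dotProduct, Pi.star_apply, hterm]
  split_ifs with h <;> simp [h, card_weight_eq_choose]

theorem braket_dickeState (A : QOp N) (k l : ℕ) :
    braket (dickeState N k) A (dickeState N l)
      = (star (weightState N k) ⬝ᵥ (A *ᵥ weightState N l))
        / ((√(N.choose k) * √(N.choose l) : ℝ) : ℂ) := by
  rw [braket_eq_dotProduct, dickeState, dickeState, mulVec_smul, star_smul, smul_dotProduct,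
    dotProduct_smul, Complex.ofReal_mul, star_inv₀, Complex.star_def, Complex.conj_ofReal]
  simp only [smul_eq_mul]
  ring

theorem braket_dickeState_collSS_pauliX_pauliZ {k l : ℕ} (hk : k ≤ N) (hl : l ≤ N) :
    braket (dickeState N k) (collSS N pauliX pauliZ) (dickeState N l)
      = (((N : ℝ) - 1 - 2 * l : ℝ) : ℂ) * ((√(((N : ℝ) - l) * (l + 1)) : ℝ) : ℂ)
          * kdel ((k : ℤ) - l - 1)
        + (((N : ℝ) - 1 - 2 * k : ℝ) : ℂ) * ((√(((N : ℝ) - k) * (k + 1)) : ℝ) : ℂ)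
          * kdel ((l : ℤ) - k - 1) := by
  rw [braket_dickeState, collSS_pauliX_pauliZ_mulVec_weightState, dotProduct_add, dotProduct_smul,
    dotProduct_smul, dotProduct_weightState, dotProduct_weightState]
  obtain rfl | rfl | ⟨h1, h2⟩ : k = l + 1 ∨ l = k + 1 ∨ (k ≠ l + 1 ∧ l ≠ k + 1) := by omega
  · have := congrArg Complex.ofReal (succ_mul_choose_succ_div_sqrt hk)
    simp only [kdel]
    split_ifs <;> try omega
    push_cast at this ⊢
    linear_combination ((N : ℂ) - 1 - 2 * l) * this
  · have := congrArg Complex.ofReal (sub_mul_choose_div_sqrt hl)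
    simp only [kdel]
    split_ifs <;> try omega
    push_cast at this ⊢
    linear_combination ((N : ℂ) - 1 - 2 * k) * this
  · simp only [kdel]
    split_ifs <;> first | omega | simp

theorem braket_dickeState_collSS_pauliY_pauliZ {k l : ℕ} (hk : k ≤ N) (hl : l ≤ N) :
    braket (dickeState N k) (collSS N pauliY pauliZ) (dickeState N l)
      = Complex.I * (((k : ℤ) - l).sign : ℂ)
        * ((((N : ℝ) - 1 - 2 * l : ℝ) : ℂ) * ((√(((N : ℝ) - l) * (l + 1)) : ℝ) : ℂ)
            * kdel ((k : ℤ) - l - 1)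
          + (((N : ℝ) - 1 - 2 * k : ℝ) : ℂ) * ((√(((N : ℝ) - k) * (k + 1)) : ℝ) : ℂ)
            * kdel ((l : ℤ) - k - 1)) := by
  rw [braket_dickeState, collSS_pauliY_pauliZ_mulVec_weightState, dotProduct_sub, dotProduct_smul,
    dotProduct_smul, dotProduct_weightState, dotProduct_weightState]
  obtain rfl | rfl | ⟨h1, h2⟩ : k = l + 1 ∨ l = k + 1 ∨ (k ≠ l + 1 ∧ l ≠ k + 1) := by omega
  · have := congrArg Complex.ofReal (succ_mul_choose_succ_div_sqrt hk)
    rw [Int.sign_eq_one_of_pos (by omega)]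
    simp only [kdel]
    split_ifs <;> try omega
    push_cast at this ⊢
    linear_combination Complex.I * ((N : ℂ) - 1 - 2 * l) * this
  · have := congrArg Complex.ofReal (sub_mul_choose_div_sqrt hl)
    rw [Int.sign_eq_neg_one_of_neg (by omega)]
    simp only [kdel]
    split_ifs <;> try omega
    push_cast at this ⊢
    linear_combination -Complex.I * ((N : ℂ) - 1 - 2 * k) * this
  · simp only [kdel]
    split_ifs <;> first | omega | simp

theorem braket_dickeState_collSS_pauliX_pauliY {k l : ℕ} (hk : k ≤ N) (hl : l ≤ N) :
    braket (dickeState N k) (collSS N pauliX pauliY) (dickeState N l)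
      = Complex.I * (((k : ℤ) - l).sign : ℂ)
        * (((√((l + 1) * (l + 2) * ((N : ℝ) - l) * ((N : ℝ) - l - 1)) : ℝ) : ℂ)
            * kdel ((k : ℤ) - l - 2)
          + ((√((k + 1) * (k + 2) * ((N : ℝ) - k) * ((N : ℝ) - k - 1)) : ℝ) : ℂ)
            * kdel ((l : ℤ) - k - 2)) := by
  rw [braket_dickeState, collSS_pauliX_pauliY_mulVec_weightState, dotProduct_sub, dotProduct_smul,
    dotProduct_smul, dotProduct_weightState, dotProduct_weightState]
  obtain rfl | rfl | ⟨h1, h2⟩ : k = l + 2 ∨ l = k + 2 ∨ (k ≠ l + 2 ∧ l ≠ k + 2) := by omega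
  · have := congrArg Complex.ofReal (succ_mul_succ_mul_choose_div_sqrt hk)
    rw [Int.sign_eq_one_of_pos (by omega)]
    simp only [kdel]
    split_ifs <;> try omega
    push_cast at this ⊢
    linear_combination Complex.I * this
  · have := congrArg Complex.ofReal (sub_mul_sub_mul_choose_div_sqrt hl)
    rw [Int.sign_eq_neg_one_of_neg (by omega)]
    simp only [kdel]
    split_ifs <;> try omega
    push_cast at this ⊢
    linear_combination -Complex.I * this
  · simp only [kdel]
    split_ifs <;> first | omega | simp

end DickeMatrixElements

theorem stmt_9_general (n J : ℕ) (hJ : 2 * J ≤ n) (hpar : (n - 2 * J) % 2 = 0)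
    (k l : ℕ) (hk : k ≤ 2 * J) (hl : l ≤ 2 * J) :
    braket (xiState n J k) (collSS n pauliX pauliZ) (xiState n J l)
      = ((((2 * (J : ℝ) - 1 - 2 * (l : ℝ)) : ℝ) : ℂ)) * (((Real.sqrt ((2 * (J : ℝ) - (l : ℝ)) * ((l : ℝ) + 1)) : ℝ) : ℂ)) * kdel ((k : ℤ) - (l : ℤ) - 1) + ((((2 * (J : ℝ) - 1 - 2 * (k : ℝ)) : ℝ) : ℂ)) * (((Real.sqrt ((2 * (J : ℝ) - (k : ℝ)) * ((k : ℝ) + 1)) : ℝ) : ℂ)) * kdel ((l : ℤ) - (k : ℤ) - 1)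
    ∧ braket (xiState n J k) (collSS n pauliY pauliZ) (xiState n J l)
      = Complex.I * ((((k : ℤ) - (l : ℤ)).sign : ℤ) : ℂ) * (((((2 * (J : ℝ) - 1 - 2 * (l : ℝ)) : ℝ) : ℂ)) * (((Real.sqrt ((2 * (J : ℝ) - (l : ℝ)) * ((l : ℝ) + 1)) : ℝ) : ℂ)) * kdel ((k : ℤ) - (l : ℤ) - 1) + ((((2 * (J : ℝ) - 1 - 2 * (k : ℝ)) : ℝ) : ℂ)) * (((Real.sqrt ((2 * (J : ℝ) - (k : ℝ)) * ((k : ℝ) + 1)) : ℝ) : ℂ)) * kdel ((l : ℤ) - (k : ℤ) - 1))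
    ∧ braket (xiState n J k) (collSS n pauliX pauliY) (xiState n J l)
      = Complex.I * ((((k : ℤ) - (l : ℤ)).sign : ℤ) : ℂ)
          * ((((Real.sqrt (((l : ℝ) + 1) * ((l : ℝ) + 2) * (2 * (J : ℝ) - (l : ℝ)) * (2 * (J : ℝ) - (l : ℝ) - 1)) : ℝ) : ℂ)) * kdel ((k : ℤ) - (l : ℤ) - 2)
            + (((Real.sqrt (((k : ℝ) + 1) * ((k : ℝ) + 2) * (2 * (J : ℝ) - (k : ℝ)) * (2 * (J : ℝ) - (k : ℝ) - 1)) : ℝ) : ℂ)) * kdel ((l : ℤ) - (k : ℤ) - 2)) := by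
  obtain ⟨p, rfl⟩ : ∃ p, n = 2 * J + 2 * p := ⟨(n - 2 * J) / 2, by omega⟩
  have hXZ : (pauliX * pauliZ).trace = 0 := by simp [pauliX_mul_pauliZ, trace_fin_two]
  have hYZ : (pauliY * pauliZ).trace = 0 := by simp [pauliY_mul_pauliZ, trace_fin_two]
  have hXY : (pauliX * pauliY).trace = 0 := by simp [pauliX_mul_pauliY, trace_fin_two]
  rw [braket_xiState_collSS_eq_braket_dickeState trace_pauliX trace_pauliZ hXZ,
    braket_xiState_collSS_eq_braket_dickeState trace_pauliY trace_pauliZ hYZ,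
    braket_xiState_collSS_eq_braket_dickeState trace_pauliX trace_pauliY hXY,
    braket_dickeState_collSS_pauliX_pauliZ hk hl, braket_dickeState_collSS_pauliY_pauliZ hk hl,
    braket_dickeState_collSS_pauliX_pauliY hk hl]
  push_cast
  exact ⟨rfl, rfl, rfl⟩

/-- Matrix elements of the collective operators `S_{xz}`, `S_{yz}`, `S_{xy}` in the basis
`|ξ_{k,J}⟩ = |D^k_{2J}⟩ ⊗ |ψ⁻⟩^{⊗(n−2J)/2}`. -/
theorem stmt_9 (n J : ℕ) (hn : 1 ≤ n) (hJ : 2 * J ≤ n) (hpar : (n - 2 * J) % 2 = 0)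
    (k l : ℕ) (hk : k ≤ 2 * J) (hl : l ≤ 2 * J) :
    braket (xiState n J k) (collSS n pauliX pauliZ) (xiState n J l)
      = ((((2 * (J : ℝ) - 1 - 2 * (l : ℝ)) : ℝ) : ℂ)) * (((Real.sqrt ((2 * (J : ℝ) - (l : ℝ)) * ((l : ℝ) + 1)) : ℝ) : ℂ)) * kdel ((k : ℤ) - (l : ℤ) - 1) + ((((2 * (J : ℝ) - 1 - 2 * (k : ℝ)) : ℝ) : ℂ)) * (((Real.sqrt ((2 * (J : ℝ) - (k : ℝ)) * ((k : ℝ) + 1)) : ℝ) : ℂ)) * kdel ((l : ℤ) - (k : ℤ) - 1)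
    ∧ braket (xiState n J k) (collSS n pauliY pauliZ) (xiState n J l)
      = Complex.I * ((((k : ℤ) - (l : ℤ)).sign : ℤ) : ℂ) * (((((2 * (J : ℝ) - 1 - 2 * (l : ℝ)) : ℝ) : ℂ)) * (((Real.sqrt ((2 * (J : ℝ) - (l : ℝ)) * ((l : ℝ) + 1)) : ℝ) : ℂ)) * kdel ((k : ℤ) - (l : ℤ) - 1) + ((((2 * (J : ℝ) - 1 - 2 * (k : ℝ)) : ℝ) : ℂ)) * (((Real.sqrt ((2 * (J : ℝ) - (k : ℝ)) * ((k : ℝ) + 1)) : ℝ) : ℂ)) * kdel ((l : ℤ) - (k : ℤ) - 1))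
    ∧ braket (xiState n J k) (collSS n pauliX pauliY) (xiState n J l)
      = Complex.I * ((((k : ℤ) - (l : ℤ)).sign : ℤ) : ℂ)
          * ((((Real.sqrt (((l : ℝ) + 1) * ((l : ℝ) + 2) * (2 * (J : ℝ) - (l : ℝ)) * (2 * (J : ℝ) - (l : ℝ) - 1)) : ℝ) : ℂ)) * kdel ((k : ℤ) - (l : ℤ) - 2)
            + (((Real.sqrt (((k : ℝ) + 1) * ((k : ℝ) + 2) * (2 * (J : ℝ) - (k : ℝ)) * (2 * (J : ℝ) - (k : ℝ) - 1)) : ℝ) : ℂ)) * kdel ((l : ℤ) - (k : ℤ) - 2)) :=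
  stmt_9_general n J hJ hpar k l hk hl
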